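/- Consider the linear demand model with parameters α, β ∈ ℝ and φ_i ∈ ℝ^i for i = 1,…,n, and horizon H ≥ n. For a price vector p = (p_1,…,p_H) ∈ ℝ^H, let s_h = [p_{max(1,h−n)},…,p_{h−2},p_{h−1}]ᵀ for 2 ≤ h ≤ H, and define the episode value V_p = Σ_{h=1}^H p_h·d_h where d_1 = α + β·p_1, d_h = α + β·p_h + φ_{h−1}ᵀ·s_h for 2 ≤ h ≤ n, and d_h = α + β·p_h + φ_nᵀ·s_h for n+1 ≤ h ≤ H. Define the H×H matrix M_θ by: M_θ[h,h] = β for 1 ≤ h ≤ H; M_θ[max(h−n,1):h−1, h] = (1/2)·φ_{min(h−1,n)} and M_θ[h, max(h−n,1):h−1] = (1/2)·φ_{min(h−1,n)}ᵀ for 2 ≤ h ≤ H; and all other entries zero. Then V_p = pᵀ·M_θ·p + α·1ᵀ·p, where p is treated as a column vector in ℝ^H and 1 is the all-ones vector. -/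

import Mathlib

/-!
The demand at period `h` is `α + β p_h + Σ_g L g h · p_g`, where the lag matrix `L`
(`lagMatrix`) is strictly upper triangular with bandwidth `n` and carries `φ_{min(h,n)}` in
column `h`. Hence `V_p = α 1ᵀp + β pᵀp + pᵀ L p`. On the other side `M_θ = β I + ½ (L + Lᵀ)`,
and `pᵀ Lᵀ p = pᵀ L p`, so `pᵀ M_θ p = β pᵀp + pᵀ L p` as well.

Periods are indexed from `0`: the paper's period `h` is our `h - 1`, so the state at period
`h` is `[p_{max(0,h-n)},…,p_{h-1}]`, of length `min h n`, and it is paired with `φ_{min h n}`.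
-/

noncomputable section
open Matrix

/-- The `n`-step price history (state) before (0-indexed) period `h`:
`s_h = [p_{max(0,h-n)}, …, p_{h-1}]`. -/
def stateList (n : ℕ) (p : ℕ → ℝ) (h : ℕ) : List ℝ :=
  ((List.range h).drop (h - n)).map p

/-- Expected demand in the linear model: `d = α + β·p + φ_{l}ᵀ s` where `l` is the
length of the state `s` (so `l = min(h-1,n)` at the paper's period `h`). -/
def linDemand (a b : ℝ) (φ : (i : ℕ) → Fin i → ℝ) (p : ℝ) (s : List ℝ) : ℝ :=
  a + b * p + ∑ j : Fin s.length, φ s.length j * s.get j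

/-- Episode value of the price sequence `p` over horizon `H` with `n`-step memory:
`V_p = Σ_{h=1}^H p_h · d_h`. -/
def linValue (H n : ℕ) (a b : ℝ) (φ : (i : ℕ) → Fin i → ℝ) (p : ℕ → ℝ) : ℝ :=
  ∑ h ∈ Finset.range H, p h * linDemand a b φ (p h) (stateList n p h)

/-- The `H × H` matrix `M_θ`: diagonal entries `β`; for a column `h` (0-indexed, the
paper's column `h+1`), the entries in rows `max(h-n,0),…,h-1` are `(1/2)·φ_{min(h,n)}`,
symmetrically in rows; all other entries vanish. -/
def linM (n H : ℕ) (b : ℝ) (φ : (i : ℕ) → Fin i → ℝ) : Matrix (Fin H) (Fin H) ℝ :=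
  fun g h =>
    if g = h then b
    else if hc : (g : ℕ) < h ∧ (h : ℕ) - g ≤ n then
      (1 / 2) * φ (min (h : ℕ) n) ⟨(g : ℕ) - ((h : ℕ) - min (h : ℕ) n), by omega⟩
    else if hc' : (h : ℕ) < g ∧ (g : ℕ) - h ≤ n then
      (1 / 2) * φ (min (g : ℕ) n) ⟨(h : ℕ) - ((g : ℕ) - min (g : ℕ) n), by omega⟩
    else 0

def lagMatrix (n H : ℕ) (φ : (i : ℕ) → Fin i → ℝ) : Matrix (Fin H) (Fin H) ℝ :=
  fun g h =>
    if hc : (g : ℕ) < h ∧ (h : ℕ) - g ≤ n then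
      φ (min (h : ℕ) n) ⟨(g : ℕ) - ((h : ℕ) - min (h : ℕ) n), by omega⟩
    else 0

theorem linM_eq_smul_one_add_lagMatrix (n H : ℕ) (b : ℝ) (φ : (i : ℕ) → Fin i → ℝ) :
    linM n H b φ = b • 1 + (1 / 2 : ℝ) • (lagMatrix n H φ + (lagMatrix n H φ)ᵀ) := by
  ext g h
  simp only [linM, lagMatrix, Matrix.add_apply, Matrix.smul_apply, one_apply, transpose_apply,
    smul_eq_mul, Fin.ext_iff]
  split_ifs <;> first | omega | ring

theorem dotProduct_add_transpose_mulVec {m R : Type*} [Fintype m] [CommSemiring R]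
    (A : Matrix m m R) (v : m → R) :
    v ⬝ᵥ ((A + Aᵀ) *ᵥ v) = 2 * (v ⬝ᵥ (A *ᵥ v)) := by
  rw [add_mulVec, dotProduct_add, dotProduct_transpose_mulVec, two_mul]

theorem fin_family_congr {α : Type*} (f : (i : ℕ) → Fin i → α) {l m : ℕ} (hlm : l = m)
    {i : Fin l} {k : Fin m} (hik : (i : ℕ) = k) : f l i = f m k := by
  subst hlm; rw [Fin.ext hik]

theorem stateList_length (n : ℕ) (q : ℕ → ℝ) (h : ℕ) :
    (stateList n q h).length = min h n := by
  simp only [stateList, List.length_map, List.length_drop, List.length_range]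
  omega

theorem stateList_get (n : ℕ) (q : ℕ → ℝ) (h : ℕ) (j : Fin (stateList n q h).length) :
    (stateList n q h).get j = q (h - n + j) := by
  rw [List.get_eq_getElem]
  simp only [stateList, List.getElem_map, List.getElem_drop, List.getElem_range]

theorem dotProduct_linM_mulVec (n H : ℕ) (b : ℝ) (φ : (i : ℕ) → Fin i → ℝ) (p : Fin H → ℝ) :
    p ⬝ᵥ (linM n H b φ *ᵥ p) = b * (p ⬝ᵥ p) + p ⬝ᵥ (lagMatrix n H φ *ᵥ p) := by
  rw [linM_eq_smul_one_add_lagMatrix, add_mulVec, smul_mulVec, smul_mulVec, one_mulVec,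
    dotProduct_add, dotProduct_smul, dotProduct_smul, dotProduct_add_transpose_mulVec,
    smul_eq_mul, smul_eq_mul]
  ring

theorem sum_stateList_eq_vecMul_lagMatrix (n : ℕ) {H : ℕ} (φ : (i : ℕ) → Fin i → ℝ)
    (q : ℕ → ℝ) (p : Fin H → ℝ) (hqp : ∀ g : Fin H, q g = p g) (h : Fin H) :
    ∑ j : Fin (stateList n q h).length, φ (stateList n q h).length j * (stateList n q h).get j
      = (p ᵥ* lagMatrix n H φ) h := by
  have hlen := stateList_length n q h
  let e : Fin (stateList n q h).length → Fin H := fun j => ⟨h - n + j, by omega⟩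
  refine Fintype.sum_of_injective e (fun i j hij => by ext; simpa [e] using hij) _
    (fun g => p g * lagMatrix n H φ g h) (fun g hg => ?_) (fun j => ?_)
  · suffices ¬((g : ℕ) < h ∧ (h : ℕ) - g ≤ n) by simp only [lagMatrix, dif_neg this, mul_zero]
    rintro hwin
    exact hg ⟨⟨g - (h - n), by omega⟩, Fin.ext (by simp only [e]; omega)⟩
  · have hwin : (h - n + j : ℕ) < h ∧ (h : ℕ) - (h - n + j) ≤ n := by omega
    rw [stateList_get, hqp (e j), mul_comm]
    simp only [lagMatrix, e, dif_pos hwin]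
    exact congrArg _ (fin_family_congr φ hlen (by dsimp only; omega))

theorem linValue_eq_dotProduct (n H : ℕ) (a b : ℝ) (φ : (i : ℕ) → Fin i → ℝ) (q : ℕ → ℝ)
    (p : Fin H → ℝ) (hqp : ∀ g : Fin H, q g = p g) :
    linValue H n a b φ q = a * ∑ h, p h + b * (p ⬝ᵥ p) + p ⬝ᵥ (p ᵥ* lagMatrix n H φ) := by
  rw [linValue, ← Fin.sum_univ_eq_sum_range (fun h => q h * linDemand a b φ (q h) _)]
  simp only [linDemand, hqp, sum_stateList_eq_vecMul_lagMatrix n φ q p hqp, dotProduct,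
    Finset.mul_sum, ← Finset.sum_add_distrib]
  exact Finset.sum_congr rfl fun h _ => by ring

theorem linValue_eq_quadratic_form_general
    (n H : ℕ) (a b : ℝ) (φ : (i : ℕ) → Fin i → ℝ) (p : Fin H → ℝ) :
    linValue H n a b φ (fun h => if hh : h < H then p ⟨h, hh⟩ else 0)
      = p ⬝ᵥ (linM n H b φ).mulVec p + a * (∑ h, p h) := by
  rw [linValue_eq_dotProduct n H a b φ _ p (fun g => dif_pos g.isLt), dotProduct_linM_mulVec,
    dotProduct_mulVec, dotProduct_comm (p ᵥ* lagMatrix n H φ)]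
  ring

/-- For the linear demand model with parameters `α, β, φ_1,…,φ_n`
and horizon `H ≥ n`, the episode value of any price vector `p ∈ ℝ^H` satisfies
`V_p = pᵀ M_θ p + α·1ᵀp`. -/
theorem linValue_eq_quadratic_form
    (n H : ℕ) (hHn : n ≤ H) (a b : ℝ) (φ : (i : ℕ) → Fin i → ℝ) (p : Fin H → ℝ) :
    linValue H n a b φ (fun h => if hh : h < H then p ⟨h, hh⟩ else 0)
      = p ⬝ᵥ (linM n H b φ).mulVec p + a * (∑ h, p h) :=
  linValue_eq_quadratic_form_general n H a b φ p

end
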